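/- Fix N ≥ 3, let H_B be the MCS battery Hamiltonian on N+1 qubits, and let φ be the product state |+z⟩₀ ⊗ |+x⟩^{⊗N}, i.e. the unit vector φ f = if f 0 = 0 then (2:ℂ)^(-(N:ℝ)/2) else 0. Then star φ ⬝ᵥ (H_B.mulVec φ) = 0 and star φ ⬝ᵥ ((H_B * H_B).mulVec φ) = N^2 + N, so the energy variance of H_B in the state φ equals N² + N and scales quadratically with system size. -/

import Mathlib

/-!
Every term of `H_B` maps `φ` to a product state. Since `|+⟩` is fixed by `σx`, the term
`σx⁽⁰⁾ σx⁽ⁱ⁾` only flips the central spin, giving `|1⟩ ⊗ |+⟩^{⊗N}` for every `i`; the term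
`σz⁽ⁱ⁾ σz⁽ⁱ⊕¹⁾` turns the two `|+⟩` on the bond `{i, i⊕1}` into `|−⟩`. So
`H_B φ = N |1⟩|+⟩^{⊗N} + ∑ᵢ χᵢ`, where the `χᵢ` and `|1⟩|+⟩^{⊗N}` are orthonormal product states
orthogonal to `φ`: for `N ≥ 3` distinct bonds are distinct sets of sites, and a single site with
`⟨+|−⟩ = 0` or `⟨0|1⟩ = 0` kills an inner product of product states. Hence `⟨φ|H_B|φ⟩ = 0`, and
since `H_B` is Hermitian, `⟨φ|H_B²|φ⟩ = ‖H_B φ‖² = N² + N`.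
-/

open scoped Matrix.Norms.L2Operator
open scoped Matrix

/-- The 2×2 matrix `P` acting on site `j` of a chain of `N+1` qubits
(identity elsewhere): `P⁽ʲ⁾ f g = P (f j) (g j) * ∏_{k ≠ j} δ_{f k, g k}`. -/
def siteOp {N : ℕ} (P : Matrix (Fin 2) (Fin 2) ℂ) (j : Fin (N + 1)) :
    Matrix (Fin (N + 1) → Fin 2) (Fin (N + 1) → Fin 2) ℂ :=
  fun f g => P (f j) (g j) * ∏ k ∈ Finset.univ.erase j, (if f k = g k then (1 : ℂ) else 0)

/-- Pauli X. -/
def σx : Matrix (Fin 2) (Fin 2) ℂ := !![0, 1; 1, 0]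
/-- Pauli Y. -/
def σy : Matrix (Fin 2) (Fin 2) ℂ := !![0, -Complex.I; Complex.I, 0]
/-- Pauli Z. -/
def σz : Matrix (Fin 2) (Fin 2) ℂ := !![1, 0; 0, -1]

/-- The peripheral site labelled `i+1` (site `0` is the central spin). -/
def per {N : ℕ} (i : Fin N) : Fin (N + 1) := i.succ

/-- The cyclic successor `i ⊕ 1` among the peripheral sites `{1, …, N}`. -/
def perS {N : ℕ} (i : Fin N) : Fin (N + 1) :=
  ⟨(i.1 + 1) % N + 1, Nat.succ_lt_succ (Nat.mod_lt _ i.pos)⟩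
/-- The cyclic predecessor `i ⊖ 1` among the peripheral sites `{1, …, N}`. -/
def perP {N : ℕ} (i : Fin N) : Fin (N + 1) :=
  ⟨(i.1 + (N - 1)) % N + 1, Nat.succ_lt_succ (Nat.mod_lt _ i.pos)⟩

/-- The modified central-spin (MCS) battery Hamiltonian
`H_B = ∑_{i=1}^N σx⁽⁰⁾ σx⁽ⁱ⁾ + ∑_{i=1}^N σz⁽ⁱ⁾ σz⁽ⁱ⊕¹⁾` on `N+1` qubits (PBC). -/
noncomputable def HB (N : ℕ) :
    Matrix (Fin (N + 1) → Fin 2) (Fin (N + 1) → Fin 2) ℂ :=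
  (∑ i : Fin N, siteOp σx 0 * siteOp σx (per i)) +
  (∑ i : Fin N, siteOp σz (per i) * siteOp σz (perS i))

/-- The modified central-spin (MCS) charger Hamiltonian
`H_C = ∑_{i=1}^N σy⁽⁰⁾ σx⁽ⁱ⁾ + ∑_{i=1}^N σz⁽ⁱ⁾ σz⁽ⁱ⊕¹⁾` on `N+1` qubits (PBC). -/
noncomputable def HC (N : ℕ) :
    Matrix (Fin (N + 1) → Fin 2) (Fin (N + 1) → Fin 2) ℂ :=
  (∑ i : Fin N, siteOp σy 0 * siteOp σx (per i)) +
  (∑ i : Fin N, siteOp σz (per i) * siteOp σz (perS i))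

/-- The product state `|+z⟩₀ ⊗ |+x⟩^{⊗N}`: the unit vector
`φ f = if f 0 = 0 then 2^{-N/2} else 0`. -/
noncomputable def φprod (N : ℕ) : (Fin (N + 1) → Fin 2) → ℂ :=
  fun f => if f 0 = 0 then (((2 : ℝ) ^ (-(N : ℝ) / 2) : ℝ) : ℂ) else 0

open Function Finset

namespace Matrix

theorem IsHermitian.star_dotProduct_mul_self_mulVec {n R : Type*} [Fintype n] [Semiring R]
    [StarRing R] {A : Matrix n n R} (hA : A.IsHermitian) (v : n → R) :
    star v ⬝ᵥ (A * A) *ᵥ v = star (A *ᵥ v) ⬝ᵥ A *ᵥ v := by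
  rw [← mulVec_mulVec, dotProduct_mulVec, star_mulVec, hA.eq]

variable {ι d R : Type*} [Fintype ι] [CommSemiring R]

def piKron (P : ι → Matrix d d R) : Matrix (ι → d) (ι → d) R :=
  of fun f g => ∏ k, P k (f k) (g k)

def piKronVec (v : ι → d → R) : (ι → d) → R :=
  fun f => ∏ k, v k (f k)

theorem star_piKronVec [StarRing R] (v : ι → d → R) :
    star (piKronVec v) = piKronVec (star v) := by
  ext f
  simp [piKronVec, star_prod]

theorem conjTranspose_piKron [StarRing R] (P : ι → Matrix d d R) :
    (piKron P)ᴴ = piKron (star P) := by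
  ext f g
  simp [piKron, star_prod, conjTranspose_apply]

variable [Fintype d] [DecidableEq ι]

theorem piKron_mul (P Q : ι → Matrix d d R) : piKron P * piKron Q = piKron (P * Q) := by
  ext f g
  simp only [mul_apply, piKron, of_apply, Pi.mul_apply, ← prod_mul_distrib]
  exact (Fintype.prod_sum fun k b => P k (f k) b * Q k b (g k)).symm

theorem piKron_mulVec_piKronVec (P : ι → Matrix d d R) (v : ι → d → R) :
    piKron P *ᵥ piKronVec v = piKronVec fun k => P k *ᵥ v k := by
  ext f
  simp only [mulVec, dotProduct, piKron, piKronVec, of_apply, ← prod_mul_distrib]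
  exact (Fintype.prod_sum fun k b => P k (f k) b * v k b).symm

theorem piKronVec_dotProduct_piKronVec (u v : ι → d → R) :
    piKronVec u ⬝ᵥ piKronVec v = ∏ k, u k ⬝ᵥ v k := by
  simp only [dotProduct, piKronVec, ← prod_mul_distrib]
  exact (Fintype.prod_sum fun k b => u k b * v k b).symm

theorem piKron_mulSingle_mulVec_piKronVec [DecidableEq d] (j : ι) (P : Matrix d d R)
    (v : ι → d → R) :
    piKron (Pi.mulSingle j P) *ᵥ piKronVec v = piKronVec (update v j (P *ᵥ v j)) := by
  rw [piKron_mulVec_piKronVec]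
  congr 1
  ext k : 1
  by_cases hk : k = j
  · subst hk; simp
  · simp [hk]

theorem commute_piKron_mulSingle [DecidableEq d] {a b : ι} (hab : a ≠ b) (P Q : Matrix d d R) :
    Commute (piKron (Pi.mulSingle a P)) (piKron (Pi.mulSingle b Q)) := by
  rw [Commute, SemiconjBy, piKron_mul, piKron_mul]
  exact congrArg piKron (Pi.mulSingle_commute (f := fun _ : ι => Matrix d d R) hab P Q).eq

variable [StarRing R]

theorem isHermitian_piKron_mulSingle [DecidableEq d] (j : ι) {P : Matrix d d R}
    (hP : P.IsHermitian) : (piKron (Pi.mulSingle j P)).IsHermitian := by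
  rw [IsHermitian, conjTranspose_piKron, Pi.star_mulSingle, star_eq_conjTranspose, hP.eq]

theorem star_piKronVec_dotProduct_self {v : ι → d → R} (hv : ∀ k, star (v k) ⬝ᵥ v k = 1) :
    star (piKronVec v) ⬝ᵥ piKronVec v = 1 := by
  rw [star_piKronVec, piKronVec_dotProduct_piKronVec]
  exact prod_eq_one fun k _ => hv k

theorem star_piKronVec_dotProduct_eq_zero {u v : ι → d → R} (k : ι)
    (h : star (u k) ⬝ᵥ v k = 0) : star (piKronVec u) ⬝ᵥ piKronVec v = 0 := by
  rw [star_piKronVec, piKronVec_dotProduct_piKronVec]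
  exact prod_eq_zero (mem_univ k) h

end Matrix

open Matrix

theorem siteOp_eq_piKron {N : ℕ} (P : Matrix (Fin 2) (Fin 2) ℂ) (j : Fin (N + 1)) :
    siteOp P j = piKron (Pi.mulSingle j P) := by
  ext f g
  rw [siteOp, piKron, of_apply, ← mul_prod_erase univ _ (mem_univ j), Pi.mulSingle_eq_same]
  congr 1
  refine prod_congr rfl fun k hk => ?_
  rw [Pi.mulSingle_eq_of_ne (ne_of_mem_erase hk), one_apply]

theorem siteOp_mulVec_piKronVec {N : ℕ} (P : Matrix (Fin 2) (Fin 2) ℂ) (j : Fin (N + 1))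
    (v : Fin (N + 1) → Fin 2 → ℂ) :
    siteOp P j *ᵥ piKronVec v = piKronVec (update v j (P *ᵥ v j)) := by
  rw [siteOp_eq_piKron, piKron_mulSingle_mulVec_piKronVec]

theorem isHermitian_siteOp {N : ℕ} (j : Fin (N + 1)) {P : Matrix (Fin 2) (Fin 2) ℂ}
    (hP : P.IsHermitian) : (siteOp P j).IsHermitian := by
  rw [siteOp_eq_piKron]
  exact isHermitian_piKron_mulSingle j hP

theorem commute_siteOp {N : ℕ} {a b : Fin (N + 1)} (hab : a ≠ b)
    (P Q : Matrix (Fin 2) (Fin 2) ℂ) : Commute (siteOp P a) (siteOp Q b) := by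
  rw [siteOp_eq_piKron, siteOp_eq_piKron]
  exact commute_piKron_mulSingle hab P Q

theorem isHermitian_siteOp_mul_siteOp {N : ℕ} {a b : Fin (N + 1)} (hab : a ≠ b)
    {P Q : Matrix (Fin 2) (Fin 2) ℂ} (hP : P.IsHermitian) (hQ : Q.IsHermitian) :
    (siteOp P a * siteOp Q b).IsHermitian :=
  ((isHermitian_siteOp a hP).commute_iff (isHermitian_siteOp b hQ)).1 (commute_siteOp hab P Q)

noncomputable def invSqrtTwo : ℂ := ((2 : ℝ) ^ (-(1 : ℝ) / 2) : ℝ)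

theorem invSqrtTwo_pow (n : ℕ) :
    invSqrtTwo ^ n = (((2 : ℝ) ^ (-(n : ℝ) / 2) : ℝ) : ℂ) := by
  rw [invSqrtTwo, ← Complex.ofReal_pow, ← Real.rpow_mul_natCast (by norm_num)]
  ring_nf

theorem invSqrtTwo_mul_self : invSqrtTwo * invSqrtTwo = 1 / 2 := by
  rw [← sq, invSqrtTwo_pow]
  norm_num [Real.rpow_neg_one]

theorem conj_invSqrtTwo : starRingEnd ℂ invSqrtTwo = invSqrtTwo := Complex.conj_ofReal _

def ketZero : Fin 2 → ℂ := ![1, 0]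
def ketOne : Fin 2 → ℂ := ![0, 1]
noncomputable def ketPlus : Fin 2 → ℂ := ![invSqrtTwo, invSqrtTwo]
noncomputable def ketMinus : Fin 2 → ℂ := ![invSqrtTwo, -invSqrtTwo]

theorem ketPlus_apply (a : Fin 2) : ketPlus a = invSqrtTwo := by
  fin_cases a <;> rfl

theorem σx_mulVec_ketZero : σx *ᵥ ketZero = ketOne := by
  ext a; fin_cases a <;> simp [σx, ketZero, ketOne]

theorem σx_mulVec_ketPlus : σx *ᵥ ketPlus = ketPlus := by
  ext a; fin_cases a <;> simp [σx, ketPlus]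

theorem σz_mulVec_ketPlus : σz *ᵥ ketPlus = ketMinus := by
  ext a; fin_cases a <;> simp [σz, ketPlus, ketMinus]

theorem isHermitian_σx : σx.IsHermitian := by
  ext a b; fin_cases a <;> fin_cases b <;> simp [σx]

theorem isHermitian_σz : σz.IsHermitian := by
  ext a b; fin_cases a <;> fin_cases b <;> simp [σz]

theorem star_ketZero_dotProduct_ketZero : star ketZero ⬝ᵥ ketZero = 1 := by
  simp [ketZero, dotProduct, Fin.sum_univ_two]

theorem star_ketOne_dotProduct_ketOne : star ketOne ⬝ᵥ ketOne = 1 := by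
  simp [ketOne, dotProduct, Fin.sum_univ_two]

theorem star_ketZero_dotProduct_ketOne : star ketZero ⬝ᵥ ketOne = 0 := by
  simp [ketZero, ketOne, dotProduct, Fin.sum_univ_two]

theorem star_ketOne_dotProduct_ketZero : star ketOne ⬝ᵥ ketZero = 0 := by
  simp [ketZero, ketOne, dotProduct, Fin.sum_univ_two]

theorem star_ketPlus_dotProduct_ketPlus : star ketPlus ⬝ᵥ ketPlus = 1 := by
  simp [ketPlus, dotProduct, Fin.sum_univ_two, conj_invSqrtTwo, invSqrtTwo_mul_self]
  norm_num

theorem star_ketMinus_dotProduct_ketMinus : star ketMinus ⬝ᵥ ketMinus = 1 := by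
  simp [ketMinus, dotProduct, Fin.sum_univ_two, conj_invSqrtTwo, invSqrtTwo_mul_self]
  norm_num

theorem star_ketPlus_dotProduct_ketMinus : star ketPlus ⬝ᵥ ketMinus = 0 := by
  simp [ketPlus, ketMinus, dotProduct, Fin.sum_univ_two]

theorem star_ketMinus_dotProduct_ketPlus : star ketMinus ⬝ᵥ ketPlus = 0 := by
  simp [ketPlus, ketMinus, dotProduct, Fin.sum_univ_two]

theorem per_ne_zero {N : ℕ} (i : Fin N) : per i ≠ 0 := Fin.succ_ne_zero i

theorem perS_ne_zero {N : ℕ} (i : Fin N) : perS i ≠ 0 := by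
  simp [perS, Fin.ext_iff]

theorem val_perS {N : ℕ} (i : Fin N) : (perS i : ℕ) = if i.1 + 1 = N then 1 else i.1 + 2 := by
  have hi := i.2
  split_ifs with h
  · simp [perS, h]
  · simp [perS, Nat.mod_eq_of_lt (show i.1 + 1 < N by omega)]

theorem per_ne_perS {N : ℕ} (hN : 2 ≤ N) (i : Fin N) : per i ≠ perS i := by
  have := val_perS i
  simp only [per, ne_eq, Fin.ext_iff, Fin.val_succ]
  split_ifs at this <;> omega

theorem per_ne_perS_or_per_ne_perS {N : ℕ} (hN : 3 ≤ N) {i j : Fin N} (hij : i ≠ j) :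
    per i ≠ perS j ∨ per j ≠ perS i := by
  have hi := val_perS i
  have hj := val_perS j
  have hv : i.1 ≠ j.1 := Fin.val_ne_of_ne hij
  simp only [per, ne_eq, Fin.ext_iff, Fin.val_succ]
  split_ifs at hi hj <;> omega

noncomputable def mcsSiteState (N : ℕ) : Fin (N + 1) → Fin 2 → ℂ :=
  update (fun _ => ketPlus) 0 ketZero

noncomputable def centralFlipState (N : ℕ) : (Fin (N + 1) → Fin 2) → ℂ :=
  piKronVec (update (mcsSiteState N) 0 ketOne)

noncomputable def bondFlipSiteState {N : ℕ} (i : Fin N) : Fin (N + 1) → Fin 2 → ℂ :=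
  update (update (mcsSiteState N) (perS i) ketMinus) (per i) ketMinus

noncomputable def bondFlipState {N : ℕ} (i : Fin N) : (Fin (N + 1) → Fin 2) → ℂ :=
  piKronVec (bondFlipSiteState i)

theorem mcsSiteState_zero (N : ℕ) : mcsSiteState N 0 = ketZero := update_self ..

theorem mcsSiteState_of_ne_zero {N : ℕ} {k : Fin (N + 1)} (hk : k ≠ 0) :
    mcsSiteState N k = ketPlus := update_of_ne hk ..

theorem star_mcsSiteState_dotProduct_self (N : ℕ) (k : Fin (N + 1)) :
    star (mcsSiteState N k) ⬝ᵥ mcsSiteState N k = 1 := by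
  by_cases hk : k = 0
  · rw [hk, mcsSiteState_zero, star_ketZero_dotProduct_ketZero]
  · rw [mcsSiteState_of_ne_zero hk, star_ketPlus_dotProduct_ketPlus]

theorem φprod_eq_piKronVec (N : ℕ) : φprod N = piKronVec (mcsSiteState N) := by
  ext f
  rw [piKronVec, Fin.prod_univ_succ, mcsSiteState_zero]
  simp only [mcsSiteState_of_ne_zero (Fin.succ_ne_zero _), ketPlus_apply, prod_const, card_univ,
    Fintype.card_fin, invSqrtTwo_pow, φprod]
  rcases Fin.exists_fin_two.mp ⟨f 0, rfl⟩ with h | h <;> simp [h, ketZero]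

theorem bondFlipSiteState_zero {N : ℕ} (i : Fin N) : bondFlipSiteState i 0 = ketZero := by
  rw [bondFlipSiteState, update_of_ne (per_ne_zero i).symm, update_of_ne (perS_ne_zero i).symm,
    mcsSiteState_zero]

theorem bondFlipSiteState_per {N : ℕ} (i : Fin N) : bondFlipSiteState i (per i) = ketMinus :=
  update_self ..

theorem bondFlipSiteState_of_ne {N : ℕ} {i : Fin N} {k : Fin (N + 1)} (hk : k ≠ per i)
    (hk' : k ≠ perS i) : bondFlipSiteState i k = mcsSiteState N k := by
  rw [bondFlipSiteState, update_of_ne hk, update_of_ne hk']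

theorem star_bondFlipSiteState_dotProduct_self {N : ℕ} (i : Fin N) (k : Fin (N + 1)) :
    star (bondFlipSiteState i k) ⬝ᵥ bondFlipSiteState i k = 1 := by
  unfold bondFlipSiteState
  rw [update_apply, update_apply]
  split_ifs <;>
    simp only [star_ketMinus_dotProduct_ketMinus, star_mcsSiteState_dotProduct_self]

theorem siteOp_σx_mul_siteOp_σx_mulVec_φprod {N : ℕ} (i : Fin N) :
    (siteOp σx 0 * siteOp σx (per i)) *ᵥ φprod N = centralFlipState N := by
  have hplus : σx *ᵥ mcsSiteState N (per i) = mcsSiteState N (per i) := by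
    rw [mcsSiteState_of_ne_zero (per_ne_zero i), σx_mulVec_ketPlus]
  rw [← mulVec_mulVec, φprod_eq_piKronVec, siteOp_mulVec_piKronVec, hplus, update_eq_self,
    siteOp_mulVec_piKronVec, mcsSiteState_zero, σx_mulVec_ketZero, centralFlipState]

theorem siteOp_σz_mul_siteOp_σz_mulVec_φprod {N : ℕ} (hN : 2 ≤ N) (i : Fin N) :
    (siteOp σz (per i) * siteOp σz (perS i)) *ᵥ φprod N = bondFlipState i := by
  rw [← mulVec_mulVec, φprod_eq_piKronVec, siteOp_mulVec_piKronVec, siteOp_mulVec_piKronVec,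
    update_of_ne (per_ne_perS hN i), mcsSiteState_of_ne_zero (per_ne_zero i),
    mcsSiteState_of_ne_zero (perS_ne_zero i), σz_mulVec_ketPlus, bondFlipState, bondFlipSiteState]

theorem HB_mulVec_φprod {N : ℕ} (hN : 2 ≤ N) :
    HB N *ᵥ φprod N = (N : ℂ) • centralFlipState N + ∑ i, bondFlipState i := by
  simp only [HB, add_mulVec, sum_mulVec, siteOp_σx_mul_siteOp_σx_mulVec_φprod,
    siteOp_σz_mul_siteOp_σz_mulVec_φprod hN, sum_const, card_univ, Fintype.card_fin,
    Nat.cast_smul_eq_nsmul]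

theorem isHermitian_HB {N : ℕ} (hN : 2 ≤ N) : (HB N).IsHermitian := by
  simp only [HB, isHermitian_iff_isSelfAdjoint]
  refine .add (isSelfAdjoint_sum _ fun i _ => ?_) (isSelfAdjoint_sum _ fun i _ => ?_)
  · exact (isHermitian_siteOp_mul_siteOp (per_ne_zero i).symm isHermitian_σx
      isHermitian_σx).isSelfAdjoint
  · exact (isHermitian_siteOp_mul_siteOp (per_ne_perS hN i) isHermitian_σz
      isHermitian_σz).isSelfAdjoint

theorem star_φprod_dotProduct_centralFlipState (N : ℕ) :
    star (φprod N) ⬝ᵥ centralFlipState N = 0 := by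
  rw [φprod_eq_piKronVec, centralFlipState]
  refine star_piKronVec_dotProduct_eq_zero 0 ?_
  rw [update_self, mcsSiteState_zero, star_ketZero_dotProduct_ketOne]

theorem star_φprod_dotProduct_bondFlipState {N : ℕ} (i : Fin N) :
    star (φprod N) ⬝ᵥ bondFlipState i = 0 := by
  rw [φprod_eq_piKronVec, bondFlipState]
  refine star_piKronVec_dotProduct_eq_zero (per i) ?_
  rw [bondFlipSiteState_per, mcsSiteState_of_ne_zero (per_ne_zero i),
    star_ketPlus_dotProduct_ketMinus]

theorem star_centralFlipState_dotProduct_self (N : ℕ) :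
    star (centralFlipState N) ⬝ᵥ centralFlipState N = 1 :=
  star_piKronVec_dotProduct_self <| (forall_update_iff _ fun _ w => star w ⬝ᵥ w = 1).2
    ⟨star_ketOne_dotProduct_ketOne, fun k _ => star_mcsSiteState_dotProduct_self N k⟩

theorem star_centralFlipState_dotProduct_bondFlipState {N : ℕ} (i : Fin N) :
    star (centralFlipState N) ⬝ᵥ bondFlipState i = 0 := by
  refine star_piKronVec_dotProduct_eq_zero 0 ?_
  rw [update_self, bondFlipSiteState_zero, star_ketOne_dotProduct_ketZero]

theorem star_bondFlipState_dotProduct_centralFlipState {N : ℕ} (i : Fin N) :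
    star (bondFlipState i) ⬝ᵥ centralFlipState N = 0 := by
  refine star_piKronVec_dotProduct_eq_zero 0 ?_
  rw [update_self, bondFlipSiteState_zero, star_ketZero_dotProduct_ketOne]

theorem star_bondFlipState_dotProduct_bondFlipState {N : ℕ} (hN : 3 ≤ N) (i j : Fin N) :
    star (bondFlipState i) ⬝ᵥ bondFlipState j = if i = j then 1 else 0 := by
  split_ifs with hij
  · rw [hij]
    exact star_piKronVec_dotProduct_self (star_bondFlipSiteState_dotProduct_self j)
  have hper : per i ≠ per j := (Fin.succ_injective N).ne hij
  rcases per_ne_perS_or_per_ne_perS hN hij with h | h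
  · refine star_piKronVec_dotProduct_eq_zero (per i) ?_
    rw [bondFlipSiteState_per, bondFlipSiteState_of_ne hper h,
      mcsSiteState_of_ne_zero (per_ne_zero i), star_ketMinus_dotProduct_ketPlus]
  · refine star_piKronVec_dotProduct_eq_zero (per j) ?_
    rw [bondFlipSiteState_per, bondFlipSiteState_of_ne hper.symm h,
      mcsSiteState_of_ne_zero (per_ne_zero j), star_ketPlus_dotProduct_ketMinus]

theorem star_φprod_dotProduct_HB_mulVec_φprod {N : ℕ} (hN : 2 ≤ N) :
    star (φprod N) ⬝ᵥ HB N *ᵥ φprod N = 0 := by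
  simp [HB_mulVec_φprod hN, dotProduct_sum, star_φprod_dotProduct_centralFlipState,
    star_φprod_dotProduct_bondFlipState]

theorem star_HB_mulVec_φprod_dotProduct_self {N : ℕ} (hN : 3 ≤ N) :
    star (HB N *ᵥ φprod N) ⬝ᵥ HB N *ᵥ φprod N = (N : ℂ) ^ 2 + N := by
  simp [HB_mulVec_φprod (by omega : 2 ≤ N), star_sum, dotProduct_sum, sum_dotProduct,
    star_centralFlipState_dotProduct_self, star_centralFlipState_dotProduct_bondFlipState,
    star_bondFlipState_dotProduct_centralFlipState, star_bondFlipState_dotProduct_bondFlipState hN]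
  ring

/-- In the product state `|+z⟩₀ ⊗ |+x⟩^{⊗N}`, the MCS battery
Hamiltonian has vanishing mean and second moment `N² + N`, so its energy
variance equals `N² + N` and scales quadratically with system size. -/
theorem mcs_battery_variance (N : ℕ) (hN : 3 ≤ N) :
    star (φprod N) ⬝ᵥ ((HB N).mulVec (φprod N)) = 0 ∧
    star (φprod N) ⬝ᵥ (((HB N) * (HB N)).mulVec (φprod N))
      = (N : ℂ) ^ 2 + (N : ℂ) := by
  refine ⟨star_φprod_dotProduct_HB_mulVec_φprod (by omega), ?_⟩
  rw [(isHermitian_HB (by omega)).star_dotProduct_mul_self_mulVec]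
  exact star_HB_mulVec_φprod_dotProduct_self hN
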